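/- arXiv:1808.04209 — 2 statements merged into one kernel-verified Lean document; each statement's English description precedes it below -/
import Mathlib

section
/- Let ρ_S be a density matrix on Fin s and ρ_R a density matrix on Fin r with energy functions E_S : Fin s → ℤ, E_R : Fin r → ℤ. If ρ_R is symmetric, i.e. Δ_R ρ_R = ρ_R, then the global dephasing of the product state factorizes as Π(ρ_S ⊗ ρ_R) = (Δ_S ρ_S) ⊗ ρ_R, and consequently the mutual asymmetry vanishes: A(ρ_S) + A(ρ_R) − A(ρ_S ⊗ ρ_R) = 0. The same conclusion holds with the roles of S and R interchanged (i.e. if Δ_S ρ_S = ρ_S). -/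
open Matrix Kronecker BigOperators ComplexOrder

/-- η(x) = −x·log x -/
noncomputable def entEta (x : ℝ) : ℝ := -x * Real.log x

/-- von Neumann entropy S(ρ) = ∑ η(λ_i(ρ)) using the eigenvalues from the
spectral theorem for Hermitian matrices. -/
noncomputable def vnEntropy {n : Type*} [Fintype n] [DecidableEq n] (ρ : Matrix n n ℂ) : ℝ :=
  if h : ρ.IsHermitian then ∑ i, entEta (h.eigenvalues i) else 0

/-- A density matrix: Hermitian, positive semidefinite, trace one. -/
def IsDensityMatrix {n : Type*} [Fintype n] [DecidableEq n] (ρ : Matrix n n ℂ) : Prop :=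
  ρ.IsHermitian ∧ ρ.PosSemidef ∧ ρ.trace = 1

/-- Pinching of a matrix by a function `f` on the index set. -/
def pinch {I : Type*} {α : Type*} [DecidableEq α] (f : I → α) (M : Matrix I I ℂ) :
    Matrix I I ℂ :=
  Matrix.of fun i j => if f i = f j then M i j else 0

/-- Relative entropy of asymmetry A(ρ) = S(P_f ρ) − S(ρ). -/
noncomputable def asym {I : Type*} [Fintype I] [DecidableEq I] {α : Type*} [DecidableEq α]
    (f : I → α) (ρ : Matrix I I ℂ) : ℝ :=
  vnEntropy (pinch f ρ) - vnEntropy ρ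

/-- Energy function of the global dephasing Π. -/
def globalE {s r : ℕ} (ES : Fin s → ℤ) (ER : Fin r → ℤ) : Fin s × Fin r → ℤ :=
  fun p => ES p.1 + ER p.2

/-- Energy function of the local dephasing Δ. -/
def localE {s r : ℕ} (ES : Fin s → ℤ) (ER : Fin r → ℤ) : Fin s × Fin r → ℤ × ℤ :=
  fun p => (ES p.1, ER p.2)

/-!
If `Δ_R ρ_R = ρ_R`, then `ρ_R` has no coherences between distinct energies, so an entry of
`ρ_S ⊗ ρ_R` with `E_R k = E_R l` survives the global dephasing exactly when `E_S i = E_S j`,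
while all other entries vanish already: `Π (ρ_S ⊗ ρ_R) = Δ_S ρ_S ⊗ ρ_R`. Von Neumann entropy is
additive on tensor products of density matrices, because `U_A ⊗ U_B` diagonalises `A ⊗ B` with
eigenvalues `λ_i μ_j`, and `η (x y) = x η y + y η x` with `∑ λ_i = ∑ μ_j = 1`. Hence
`A (ρ_S ⊗ ρ_R) = A ρ_S + A ρ_R` with `A ρ_R = 0`.
-/

open Polynomial

namespace Matrix

theorem IsHermitian.kronecker {R m n : Type*} [CommMagma R] [StarMul R]
    {A : Matrix m m R} {B : Matrix n n R} (hA : A.IsHermitian) (hB : B.IsHermitian) :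
    (A ⊗ₖ B).IsHermitian := by
  rw [IsHermitian, conjTranspose_kronecker, hA.eq, hB.eq]

variable {𝕜 m n : Type*} [RCLike 𝕜] [Fintype m] [DecidableEq m] [Fintype n] [DecidableEq n]

theorem IsHermitian.sum_comp_eigenvalues_of_charpoly_eq {β : Type*} [AddCommMonoid β]
    {M : Matrix n n 𝕜} (hM : M.IsHermitian) {d : n → ℝ}
    (h : M.charpoly = ∏ i, (X - C (d i : 𝕜))) (φ : ℝ → β) :
    ∑ i, φ (hM.eigenvalues i) = ∑ i, φ (d i) := by
  have hroots : Finset.univ.val.map (RCLike.ofReal ∘ hM.eigenvalues) =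
      Finset.univ.val.map (RCLike.ofReal ∘ d : n → 𝕜) := by
    rw [← hM.roots_charpoly_eq_eigenvalues, h, Finset.prod_eq_multiset_prod]
    simpa [Multiset.map_map] using
      roots_multiset_prod_X_sub_C (Finset.univ.val.map (RCLike.ofReal ∘ d : n → 𝕜))
  rw [← Multiset.map_map, ← Multiset.map_map] at hroots
  have hsum := congrArg (fun s => (s.map φ).sum)
    (Multiset.map_injective RCLike.ofReal_injective hroots)
  simpa only [Multiset.map_map, Function.comp_def, Finset.sum_map_val] using hsum

theorem IsHermitian.charpoly_kronecker {A : Matrix m m 𝕜} {B : Matrix n n 𝕜}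
    (hA : A.IsHermitian) (hB : B.IsHermitian) :
    (A ⊗ₖ B).charpoly =
      ∏ p : m × n, (X - C ((hA.eigenvalues p.1 * hB.eigenvalues p.2 : ℝ) : 𝕜)) := by
  set U : Matrix (m × n) (m × n) 𝕜 :=
    (hA.eigenvectorUnitary : Matrix m m 𝕜) ⊗ₖ (hB.eigenvectorUnitary : Matrix n n 𝕜)
  have hU : star U * U = 1 := by
    rw [star_eq_conjTranspose, conjTranspose_kronecker, ← mul_kronecker_mul,
      ← star_eq_conjTranspose, ← star_eq_conjTranspose, Unitary.coe_star_mul_self,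
      Unitary.coe_star_mul_self, one_kronecker_one]
  have hdiag : A ⊗ₖ B = U * diagonal (fun p : m × n =>
      ((hA.eigenvalues p.1 * hB.eigenvalues p.2 : ℝ) : 𝕜)) * star U := by
    conv_lhs => rw [hA.spectral_theorem, hB.spectral_theorem, Unitary.conjStarAlgAut_apply,
      Unitary.conjStarAlgAut_apply]
    rw [mul_kronecker_mul, mul_kronecker_mul, diagonal_kronecker_diagonal]
    simp [U, star_eq_conjTranspose, conjTranspose_kronecker]
  rw [hdiag, charpoly_mul_comm, ← mul_assoc, hU, one_mul, charpoly_diagonal]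

theorem IsHermitian.sum_eigenvalues_eq_one {A : Matrix n n 𝕜} (hA : A.IsHermitian)
    (htr : A.trace = 1) : ∑ i, hA.eigenvalues i = 1 := by
  have h := hA.trace_eq_sum_eigenvalues
  rw [htr, ← RCLike.ofReal_sum] at h
  exact RCLike.ofReal_injective (h.symm.trans RCLike.ofReal_one.symm)

end Matrix

theorem entEta_mul (x y : ℝ) : entEta (x * y) = x * entEta y + y * entEta x := by
  rcases eq_or_ne x 0 with rfl | hx
  · simp [entEta]
  rcases eq_or_ne y 0 with rfl | hy
  · simp [entEta]
  rw [entEta, entEta, entEta, Real.log_mul hx hy]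
  ring

theorem vnEntropy_kronecker {m n : Type*} [Fintype m] [DecidableEq m] [Fintype n] [DecidableEq n]
    {A : Matrix m m ℂ} {B : Matrix n n ℂ}
    (hA : A.IsHermitian) (hB : B.IsHermitian) (htrA : A.trace = 1) (htrB : B.trace = 1) :
    vnEntropy (A ⊗ₖ B) = vnEntropy A + vnEntropy B := by
  rw [vnEntropy, dif_pos (hA.kronecker hB), vnEntropy, dif_pos hA, vnEntropy, dif_pos hB,
    (hA.kronecker hB).sum_comp_eigenvalues_of_charpoly_eq (hA.charpoly_kronecker hB),
    Fintype.sum_prod_type]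
  simp only [entEta_mul, Finset.sum_add_distrib, ← Finset.mul_sum, ← Finset.sum_mul,
    hA.sum_eigenvalues_eq_one htrA, hB.sum_eigenvalues_eq_one htrB, one_mul]
  ring

section Pinching

variable {I J α : Type*} [DecidableEq α]

theorem pinch_eq_self_iff {f : I → α} {M : Matrix I I ℂ} :
    pinch f M = M ↔ ∀ i j, f i ≠ f j → M i j = 0 := by
  refine ⟨fun h i j hij => ?_, fun h => ?_⟩
  · rw [← h]
    simp [pinch, hij]
  · ext i j
    by_cases hij : f i = f j <;> simp [pinch, hij, h i j]

theorem pinch_isHermitian (f : I → α) {M : Matrix I I ℂ} (hM : M.IsHermitian) :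
    (pinch f M).IsHermitian := by
  ext i j
  by_cases hij : f i = f j
  · simp [pinch, hij, ← hM.apply i j]
  · simp [pinch, hij, Ne.symm hij]

theorem trace_pinch [Fintype I] (f : I → α) (M : Matrix I I ℂ) : (pinch f M).trace = M.trace := by
  simp [trace, pinch]

theorem asym_eq_zero_of_pinch_eq [Fintype I] [DecidableEq I] {f : I → α} {M : Matrix I I ℂ}
    (h : pinch f M = M) : asym f M = 0 := by
  rw [asym, h, sub_self]

theorem pinch_add_kronecker_of_pinch_right_eq [Add α] [IsRightCancelAdd α]
    (f : I → α) {g : J → α} (A : Matrix I I ℂ) {B : Matrix J J ℂ} (hB : pinch g B = B) :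
    pinch (fun p : I × J => f p.1 + g p.2) (A ⊗ₖ B) = pinch f A ⊗ₖ B := by
  ext ⟨i, k⟩ ⟨j, l⟩
  by_cases hkl : g k = g l
  · simp [pinch, hkl]
  · simp [pinch, pinch_eq_self_iff.mp hB k l hkl]

theorem pinch_add_kronecker_of_pinch_left_eq [Add α] [IsLeftCancelAdd α]
    {f : I → α} (g : J → α) {A : Matrix I I ℂ} (B : Matrix J J ℂ) (hA : pinch f A = A) :
    pinch (fun p : I × J => f p.1 + g p.2) (A ⊗ₖ B) = A ⊗ₖ pinch g B := by
  ext ⟨i, k⟩ ⟨j, l⟩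
  by_cases hij : f i = f j
  · simp [pinch, hij]
  · simp [pinch, pinch_eq_self_iff.mp hA i j hij]

theorem asym_kronecker_of_pinch_kronecker [Fintype I] [DecidableEq I] [Fintype J] [DecidableEq J]
    {β γ : Type*} [DecidableEq β] [DecidableEq γ] {F : I × J → γ} {f : I → α} {g : J → β}
    {A : Matrix I I ℂ} {B : Matrix J J ℂ} (hA : A.IsHermitian) (hB : B.IsHermitian)
    (htrA : A.trace = 1) (htrB : B.trace = 1) (h : pinch F (A ⊗ₖ B) = pinch f A ⊗ₖ pinch g B) :
    asym F (A ⊗ₖ B) = asym f A + asym g B := by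
  rw [asym, asym, asym, h,
    vnEntropy_kronecker (pinch_isHermitian f hA) (pinch_isHermitian g hB)
      ((trace_pinch f A).trans htrA) ((trace_pinch g B).trans htrB),
    vnEntropy_kronecker hA hB htrA htrB]
  ring

end Pinching

/-- if one marginal is symmetric, the global dephasing of the product
state factorizes and the mutual asymmetry vanishes (in either order). -/
theorem mutual_asymmetry_vanishes_of_symmetric {s r : ℕ}
    (ρS : Matrix (Fin s) (Fin s) ℂ) (ρR : Matrix (Fin r) (Fin r) ℂ)
    (ES : Fin s → ℤ) (ER : Fin r → ℤ)
    (hS : IsDensityMatrix ρS) (hR : IsDensityMatrix ρR) :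
    (pinch ER ρR = ρR →
      pinch (globalE ES ER) (ρS ⊗ₖ ρR) = (pinch ES ρS) ⊗ₖ ρR ∧
      asym ES ρS + asym ER ρR - asym (globalE ES ER) (ρS ⊗ₖ ρR) = 0) ∧
    (pinch ES ρS = ρS →
      pinch (globalE ES ER) (ρS ⊗ₖ ρR) = ρS ⊗ₖ (pinch ER ρR) ∧
      asym ES ρS + asym ER ρR - asym (globalE ES ER) (ρS ⊗ₖ ρR) = 0) := by
  obtain ⟨hSH, -, hStr⟩ := hS
  obtain ⟨hRH, -, hRtr⟩ := hR
  refine ⟨fun hRsym => ?_, fun hSsym => ?_⟩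
  · have hfact : pinch (globalE ES ER) (ρS ⊗ₖ ρR) = pinch ES ρS ⊗ₖ ρR :=
      pinch_add_kronecker_of_pinch_right_eq ES ρS hRsym
    refine ⟨hfact, ?_⟩
    rw [asym_kronecker_of_pinch_kronecker hSH hRH hStr hRtr (by rw [hfact, hRsym]),
      asym_eq_zero_of_pinch_eq hRsym]
    ring
  · have hfact : pinch (globalE ES ER) (ρS ⊗ₖ ρR) = ρS ⊗ₖ pinch ER ρR :=
      pinch_add_kronecker_of_pinch_left_eq ER ρR hSsym
    refine ⟨hfact, ?_⟩
    rw [asym_kronecker_of_pinch_kronecker hSH hRH hStr hRtr (by rw [hfact, hSsym]),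
      asym_eq_zero_of_pinch_eq hSsym]
    ring
end

section
/- (Two-qubit Page–Wootters example.) Let s = r = 2 with energy functions E_S(0) = E_R(0) = 1 and E_S(1) = E_R(1) = −1, and let ρ_S = ρ_R be the 2×2 matrix all of whose entries equal 1/2 (the state |+⟩⟨+|). Then A(ρ_S) = A(ρ_R) = log 2, A(ρ_S ⊗ ρ_R) = (3/2)·log 2, and the mutual asymmetry is A(ρ_S) + A(ρ_R) − A(ρ_S ⊗ ρ_R) = (1/2)·log 2 > 0. -/
open Matrix Kronecker BigOperators ComplexOrder

/-- The qubit state |+⟩⟨+|, all of whose entries equal 1/2. -/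
noncomputable def plusState : Matrix (Fin 2) (Fin 2) ℂ := Matrix.of fun _ _ => 1 / 2

/-- Qubit energies: E(0) = 1, E(1) = −1. -/
def qubitE : Fin 2 → ℤ := ![1, -1]

/-! Every state occurring here has at most three distinct eigenvalues, so it is annihilated by a
polynomial `p`, and on the roots of `p` the function `η` agrees with a polynomial `q`; then
`S(ρ) = Re tr q(ρ)` is the trace of a matrix polynomial, computed entrywise. The states `|+⟩⟨+|` and
`|+⟩⟨+| ⊗ |+⟩⟨+|` are projections (`p = X(X - 1)`, `q = 0`), `Δ|+⟩⟨+| = 1/2 · 1` (`p = X - 1/2`), and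
`Π(|+⟩⟨+| ⊗ |+⟩⟨+|)` has spectrum `{0, 1/4, 1/4, 1/2}`; since `η(x) = log 2 · (3x - 4x²)` on
`{0, 1/4, 1/2}`, its entropy is `log 2 · (3 tr ρ - 4 tr ρ²) = log 2 · (3 - 3/2)`. -/

open Polynomial

theorem spectrum.isRoot_of_aeval_eq_zero {𝕜 A : Type*} [Field 𝕜] [Ring A] [Algebra 𝕜 A]
    {a : A} {p : 𝕜[X]} (hp : aeval a p = 0) {x : 𝕜} (hx : x ∈ spectrum 𝕜 a) : p.IsRoot x := by
  have h := spectrum.subset_polynomial_aeval a p ⟨x, hx, rfl⟩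
  rw [hp, spectrum.mem_iff, sub_zero] at h
  by_contra hne
  exact h ((Ne.isUnit hne).map (algebraMap 𝕜 A))

theorem Matrix.IsHermitian.trace_cfc {𝕜 n : Type*} [RCLike 𝕜] [Fintype n] [DecidableEq n]
    {A : Matrix n n 𝕜} (hA : A.IsHermitian) (f : ℝ → ℝ) :
    (cfc f A).trace = ∑ i, (f (hA.eigenvalues i) : 𝕜) := by
  rw [hA.cfc_eq, IsHermitian.cfc, Unitary.conjStarAlgAut_apply, trace_mul_cycle,
    Unitary.coe_star_mul_self, one_mul, trace_diagonal]
  rfl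

theorem Matrix.IsHermitian.kronecker_s12 {R m n : Type*} [CommSemiring R] [StarRing R]
    {A : Matrix m m R} {B : Matrix n n R}
    (hA : A.IsHermitian) (hB : B.IsHermitian) : (A ⊗ₖ B).IsHermitian := by
  rw [IsHermitian, conjTranspose_kronecker, hA.eq, hB.eq]

theorem entEta_zero : entEta 0 = 0 := by simp [entEta]

theorem entEta_one : entEta 1 = 0 := by simp [entEta]

theorem entEta_inv (x : ℝ) : entEta x⁻¹ = x⁻¹ * Real.log x := by
  rw [entEta, Real.log_inv]; ring

section Entropy

variable {n : Type*} [Fintype n] [DecidableEq n]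

theorem vnEntropy_eq_re_trace_cfc {A : Matrix n n ℂ} (hA : A.IsHermitian) :
    vnEntropy A = (cfc entEta A).trace.re := by
  rw [vnEntropy, dif_pos hA, hA.trace_cfc, Complex.re_sum]
  rfl

theorem vnEntropy_eq_re_trace_aeval {A : Matrix n n ℂ} (hA : A.IsHermitian) {p q : ℝ[X]}
    (hp : aeval A p = 0) (hq : ∀ x, p.IsRoot x → entEta x = q.eval x) :
    vnEntropy A = (aeval A q).trace.re := by
  rw [vnEntropy_eq_re_trace_cfc hA, ← cfc_polynomial q A hA.isSelfAdjoint,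
    cfc_congr fun x hx => hq x (spectrum.isRoot_of_aeval_eq_zero hp hx)]

theorem vnEntropy_eq_zero_of_mul_self_eq {A : Matrix n n ℂ} (hA : A.IsHermitian)
    (h : A * A = A) : vnEntropy A = 0 := by
  have hp : aeval A (X * (X - 1) : ℝ[X]) = 0 := by
    simp [mul_sub, h]
  rw [vnEntropy_eq_re_trace_aeval hA (q := 0) hp]
  · simp
  · intro x hx
    simp only [IsRoot.def, eval_mul, eval_X, eval_sub, eval_one, mul_eq_zero, sub_eq_zero] at hx
    rcases hx with rfl | rfl
    · simp [entEta_zero]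
    · simp [entEta_one]

theorem vnEntropy_smul_one (c : ℝ) :
    vnEntropy (c • (1 : Matrix n n ℂ)) = Fintype.card n * entEta c := by
  have hp : aeval (c • (1 : Matrix n n ℂ)) (X - C c) = 0 := by
    simp [Algebra.algebraMap_eq_smul_one]
  rw [vnEntropy_eq_re_trace_aeval (isHermitian_one.smul (IsSelfAdjoint.all c))
    (q := C (entEta c)) hp]
  · simp [Algebra.algebraMap_eq_smul_one, mul_comm]
  · intro x hx
    simp [root_X_sub_C.mp hx]

end Entropy

theorem isHermitian_pinch {I α : Type*} [DecidableEq α] (f : I → α)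
    {M : Matrix I I ℂ} (hM : M.IsHermitian) : (pinch f M).IsHermitian := by
  ext i j
  by_cases h : f i = f j
  · simp [pinch, h, ← hM.apply i j]
  · simp [pinch, h, Ne.symm h]

theorem plusState_isHermitian : plusState.IsHermitian := by
  ext i j; simp [plusState]

theorem plusState_mul_self : plusState * plusState = plusState := by
  ext i j; simp [plusState, mul_apply]

theorem pinch_qubitE_plusState : pinch qubitE plusState = (2⁻¹ : ℝ) • 1 := by
  ext i j
  fin_cases i <;> fin_cases j <;> simp [pinch, plusState, qubitE]

theorem asym_qubitE_plusState : asym qubitE plusState = Real.log 2 := by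
  rw [asym, pinch_qubitE_plusState, vnEntropy_smul_one,
    vnEntropy_eq_zero_of_mul_self_eq plusState_isHermitian plusState_mul_self, entEta_inv]
  simp

theorem aeval_pinch_plusState_kronecker :
    aeval (pinch (globalE qubitE qubitE) (plusState ⊗ₖ plusState))
      (X * (X - C 4⁻¹) * (X - C 2⁻¹) : ℝ[X]) = 0 := by
  simp only [map_mul, map_sub, aeval_X, aeval_C, Algebra.algebraMap_eq_smul_one]
  ext ⟨a, b⟩ ⟨c, d⟩
  fin_cases a <;> fin_cases b <;> fin_cases c <;> fin_cases d <;>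
    simp [mul_apply, Fintype.sum_prod_type, pinch, plusState, globalE, qubitE, one_apply] <;>
    norm_num

theorem vnEntropy_pinch_plusState_kronecker :
    vnEntropy (pinch (globalE qubitE qubitE) (plusState ⊗ₖ plusState)) = 3 / 2 * Real.log 2 := by
  rw [vnEntropy_eq_re_trace_aeval
    (isHermitian_pinch _ (plusState_isHermitian.kronecker_s12 plusState_isHermitian))
    aeval_pinch_plusState_kronecker (q := C (Real.log 2) * (C 3 * X - C 4 * X ^ 2))]
  · set Q := pinch (globalE qubitE qubitE) (plusState ⊗ₖ plusState)
    have htr : Q.trace = 1 := by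
      simp [Q, trace, pinch, plusState]
      norm_num
    have htr_sq : (Q ^ 2).trace = 3 / 8 := by
      simp [Q, sq, trace, Fintype.sum_prod_type, mul_apply, pinch, plusState, globalE, qubitE]
      norm_num
    simp only [map_mul, map_sub, map_pow, aeval_C, aeval_X, Algebra.algebraMap_eq_smul_one,
      smul_mul_assoc, one_mul, trace_smul, trace_sub, htr, htr_sq, Complex.smul_re,
      Complex.sub_re, smul_eq_mul]
    norm_num
    ring
  · intro x hx
    simp only [IsRoot.def, eval_mul, eval_X, eval_sub, eval_C, mul_eq_zero, sub_eq_zero] at hx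
    have hlog4 : Real.log 4 = 2 * Real.log 2 := by
      rw [show (4 : ℝ) = 2 ^ 2 by norm_num, Real.log_pow, Nat.cast_ofNat]
    rcases hx with (rfl | rfl) | rfl <;> simp [entEta_zero, entEta_inv, hlog4] <;> ring

theorem asym_globalE_plusState_kronecker :
    asym (globalE qubitE qubitE) (plusState ⊗ₖ plusState) = 3 / 2 * Real.log 2 := by
  rw [asym, vnEntropy_pinch_plusState_kronecker,
    vnEntropy_eq_zero_of_mul_self_eq (plusState_isHermitian.kronecker_s12 plusState_isHermitian)
      (by rw [← mul_kronecker_mul, plusState_mul_self]), sub_zero]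

/-- two-qubit Page–Wootters example: the local asymmetries equal
log 2, the global asymmetry equals (3/2)·log 2, and the mutual asymmetry equals
(1/2)·log 2 > 0. -/
theorem two_qubit_page_wootters :
    asym qubitE plusState = Real.log 2 ∧
    asym (globalE qubitE qubitE) (plusState ⊗ₖ plusState) = (3 / 2) * Real.log 2 ∧
    asym qubitE plusState + asym qubitE plusState -
        asym (globalE qubitE qubitE) (plusState ⊗ₖ plusState) = (1 / 2) * Real.log 2 ∧
    (0 : ℝ) < (1 / 2) * Real.log 2 := by
  refine ⟨asym_qubitE_plusState, asym_globalE_plusState_kronecker, ?_, ?_⟩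
  · rw [asym_qubitE_plusState, asym_globalE_plusState_kronecker]
    ring
  · exact mul_pos one_half_pos (Real.log_pos one_lt_two)
end
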